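/- Let (a_k)_{k≥0} be a nondecreasing sequence in [0,1]. Then pointwise on Ω, for all integers j ≤ s ≤ t: τ[s,t] < j holds if and only if there exists an integer n ∈ [s,t] with W^{j−1}_n = 0. Consequently, τ[s,t] = 1 + sup{m ∈ ℤ : m < s and W^m_n > 0 for all integers n ∈ [s,t]}, with the conventions sup ∅ = −∞ and 1 + (−∞) = −∞. -/

import Mathlib

/-!
A regeneration at `m`, i.e. `U_i < a_{i-m}` for `m ≤ i ≤ t`, forces every chain started before
`m` to stay positive on `[m, t]`: by monotonicity of `a` its height at `i` is at least `i - m + 1`.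
Conversely, if `W^{j-1}_t = k > 0`, the chain climbed one step at each of the times
`t - k + 1, …, t`, which is a regeneration at `t - k + 1 ≥ j`; since `W^{j-1}_{t-k} = 0`,
positivity on `[s, t]` forces `t - k + 1 ≤ s`. Hence `j ≤ τ[s,t]` iff `W^{j-1}` is positive on
`[s, t]`, and the supremum formula is this equivalence read with `m = j - 1`.
-/

open MeasureTheory Filter

/-- House-of-cards chain: `hoc a u m k` is `W^m_{m+k}`. -/
noncomputable def hoc (a : ℕ → ℝ) (u : ℤ → ℝ) (m : ℤ) : ℕ → ℕ
  | 0 => 0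
  | k + 1 => if u (m + k + 1) < a (hoc a u m k) then hoc a u m k + 1 else 0

/-- `W^m_n` for integers `m ≤ n`. -/
noncomputable def W (a : ℕ → ℝ) (u : ℤ → ℝ) (m n : ℤ) : ℕ := hoc a u m (n - m).toNat

/-- Regeneration time `τ[s,t]`. -/
noncomputable def tau (a : ℕ → ℝ) (u : ℤ → ℝ) (s t : ℤ) : WithBot ℤ :=
  sSup {x : WithBot ℤ | ∃ m : ℤ, x = (m : WithBot ℤ) ∧ m ≤ s ∧
    ∀ j : ℤ, m ≤ j → j ≤ t → u j < a (j - m).toNat}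

section WithBotInt

theorem coe_le_sSup_setOf_coe_iff {P : ℤ → Prop} (hP : BddAbove {m | P m}) (j : ℤ) :
    (j : WithBot ℤ) ≤ sSup {x : WithBot ℤ | ∃ m : ℤ, x = (m : WithBot ℤ) ∧ P m} ↔
      ∃ m, P m ∧ j ≤ m := by
  obtain ⟨b, hb⟩ := hP
  have hbdd : BddAbove {x : WithBot ℤ | ∃ m : ℤ, x = (m : WithBot ℤ) ∧ P m} :=
    ⟨b, by rintro _ ⟨m, rfl, hm⟩; exact WithBot.coe_le_coe.2 (hb hm)⟩
  constructor
  · intro hj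
    have hlt : ((j - 1 : ℤ) : WithBot ℤ) < _ :=
      (WithBot.coe_lt_coe.2 (sub_one_lt j)).trans_le hj
    obtain ⟨_, ⟨m, rfl, hm⟩, hjm⟩ := exists_lt_of_lt_csSup' hlt
    exact ⟨m, hm, by have := WithBot.coe_lt_coe.1 hjm; omega⟩
  · rintro ⟨m, hm, hjm⟩
    exact (WithBot.coe_le_coe.2 hjm).trans (le_csSup hbdd ⟨m, rfl, hm⟩)

theorem one_add_sSup_setOf_add_one_le (x : WithBot ℤ) :
    1 + sSup {y : WithBot ℤ | ∃ m : ℤ, y = (m : WithBot ℤ) ∧ ((m + 1 : ℤ) : WithBot ℤ) ≤ x} =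
      x := by
  induction x with
  | bot =>
    have hempty : {y : WithBot ℤ | ∃ m : ℤ, y = (m : WithBot ℤ) ∧
        ((m + 1 : ℤ) : WithBot ℤ) ≤ ⊥} = ∅ := by
      ext y
      simp
    rw [hempty, WithBot.sSup_empty, WithBot.add_bot]
  | coe M =>
    have hsSup : sSup {y : WithBot ℤ | ∃ m : ℤ, y = (m : WithBot ℤ) ∧
        ((m + 1 : ℤ) : WithBot ℤ) ≤ M} = ((M - 1 : ℤ) : WithBot ℤ) := by
      refine le_antisymm (csSup_le' ?_)
        (le_csSup ⟨((M - 1 : ℤ) : WithBot ℤ), ?_⟩ ⟨M - 1, rfl, by simp⟩)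
      all_goals
        rintro _ ⟨m, rfl, hm⟩
        have := WithBot.coe_le_coe.1 hm
        exact WithBot.coe_le_coe.2 (by omega)
    rw [hsSup, ← WithBot.coe_one, ← WithBot.coe_add, add_sub_cancel]

end WithBotInt

section HouseOfCards

variable {a : ℕ → ℝ} {u : ℤ → ℝ}

/-- The condition on a candidate `m` in the definition of `τ[s,t]`: at every time `i ∈ [m, t]`
a chain of height `i - m` climbs. -/
def IsRegeneration (a : ℕ → ℝ) (u : ℤ → ℝ) (m t : ℤ) : Prop :=
  ∀ i : ℤ, m ≤ i → i ≤ t → u i < a (i - m).toNat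

theorem tau_le (s t : ℤ) : tau a u s t ≤ s :=
  csSup_le' <| by rintro _ ⟨m, rfl, hms, -⟩; exact WithBot.coe_le_coe.2 hms

theorem hoc_le (m : ℤ) : ∀ k, hoc a u m k ≤ k
  | 0 => le_rfl
  | k + 1 => by
    rw [hoc]
    split
    · exact Nat.succ_le_succ (hoc_le m k)
    · exact Nat.zero_le _

theorem W_le (b n : ℤ) : W a u b n ≤ (n - b).toNat := hoc_le b _

theorem W_add_one {b n : ℤ} (h : b ≤ n) :
    W a u b (n + 1) = if u (n + 1) < a (W a u b n) then W a u b n + 1 else 0 := by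
  rw [W, W, show (n + 1 - b).toNat = (n - b).toNat + 1 by omega, hoc,
    show b + ((n - b).toNat : ℤ) + 1 = n + 1 by omega]

theorem W_step_of_pos {b n : ℤ} (h : b < n) (hpos : 0 < W a u b n) :
    u n < a (W a u b (n - 1)) ∧ W a u b n = W a u b (n - 1) + 1 := by
  have hstep := W_add_one (a := a) (u := u) (show b ≤ n - 1 by omega)
  rw [sub_add_cancel] at hstep
  rw [hstep] at hpos ⊢
  split_ifs at hpos ⊢ with hu
  · exact ⟨hu, rfl⟩
  · exact absurd hpos (lt_irrefl 0)

theorem W_sub_of_le_W {b n : ℤ} : ∀ k : ℕ, k ≤ W a u b n → W a u b (n - k) = W a u b n - k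
  | 0, _ => by simp
  | k + 1, hk => by
    have ih := W_sub_of_le_W k (Nat.le_of_succ_le hk)
    have hbk : b < n - k := by have := W_le (a := a) (u := u) b n; omega
    have hstep := (W_step_of_pos (a := a) (u := u) hbk (by omega)).2
    rw [Nat.cast_succ, ← sub_sub]
    omega

theorem isRegeneration_sub_W_add_one (b n : ℤ) :
    IsRegeneration a u (n - W a u b n + 1) n := by
  intro i hi hin
  have hWle := W_le (a := a) (u := u) b n
  have hWi := W_sub_of_le_W (a := a) (u := u) (b := b) (n := n) (n - i).toNat (by omega)
  rw [show n - ((n - i).toNat : ℤ) = i by omega] at hWi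
  obtain ⟨hu, hstep⟩ := W_step_of_pos (a := a) (u := u) (show b < i by omega) (by omega)
  rwa [show W a u b (i - 1) = (i - (n - W a u b n + 1)).toNat by omega] at hu

theorem lt_W_of_isRegeneration (hmono : Monotone a) {b m t : ℤ} (hbm : b < m)
    (hreg : IsRegeneration a u m t) :
    ∀ n, m ≤ n → n ≤ t → (n - m).toNat < W a u b n := by
  intro n hmn
  induction n, hmn using Int.leInduction with
  | base =>
    intro hmt
    have hu : u m < a (W a u b (m - 1)) :=
      (by simpa using hreg m le_rfl hmt : u m < a 0).trans_le (hmono (Nat.zero_le _))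
    have := W_add_one (a := a) (u := u) (show b ≤ m - 1 by omega)
    rw [sub_add_cancel, if_pos hu] at this
    omega
  | succ n hmn ih =>
    intro hnt
    have ih := ih (by omega)
    have hu : u (n + 1) < a (W a u b n) :=
      (hreg (n + 1) (by omega) hnt).trans_le (hmono (by omega))
    rw [W_add_one (by omega), if_pos hu]
    omega

theorem exists_isRegeneration_iff (hmono : Monotone a) {j s t : ℤ} (hst : s ≤ t) :
    (∃ m, (m ≤ s ∧ IsRegeneration a u m t) ∧ j ≤ m) ↔
      ∀ n, s ≤ n → n ≤ t → 0 < W a u (j - 1) n := by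
  constructor
  · rintro ⟨m, ⟨hms, hreg⟩, hjm⟩ n hsn hnt
    exact (Nat.zero_le _).trans_lt (lt_W_of_isRegeneration hmono (by omega) hreg n (by omega) hnt)
  · intro hpos
    have hWle := W_le (a := a) (u := u) (j - 1) t
    have hWt := hpos t hst le_rfl
    refine ⟨t - W a u (j - 1) t + 1, ⟨?_, isRegeneration_sub_W_add_one _ _⟩, by omega⟩
    by_contra! hs
    have hzero := W_sub_of_le_W (a := a) (u := u) (b := j - 1) (n := t) _ le_rfl
    have := hpos (t - W a u (j - 1) t) (by omega) (by omega)
    omega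

theorem coe_le_tau_iff (hmono : Monotone a) {s t : ℤ} (hst : s ≤ t) (j : ℤ) :
    (j : WithBot ℤ) ≤ tau a u s t ↔ ∀ n, s ≤ n → n ≤ t → 0 < W a u (j - 1) n :=
  (coe_le_sSup_setOf_coe_iff ⟨s, fun _ hm => hm.1⟩ j).trans
    (exists_isRegeneration_iff hmono hst)

end HouseOfCards

theorem stmt3_general (a : ℕ → ℝ) (hmono : Monotone a)
    (u : ℤ → ℝ) (j s t : ℤ) (hst : s ≤ t) :
    (tau a u s t < (j : WithBot ℤ) ↔
        ∃ n : ℤ, s ≤ n ∧ n ≤ t ∧ W a u (j - 1) n = 0) ∧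
      tau a u s t = 1 + sSup {x : WithBot ℤ | ∃ m : ℤ, x = (m : WithBot ℤ) ∧ m < s ∧
        ∀ n : ℤ, s ≤ n → n ≤ t → 0 < W a u m n} := by
  refine ⟨?_, ?_⟩
  · rw [← not_le, coe_le_tau_iff hmono hst j]
    simp only [not_forall, Nat.pos_iff_ne_zero, not_not, exists_prop]
  · have hset : {x : WithBot ℤ | ∃ m : ℤ, x = (m : WithBot ℤ) ∧ m < s ∧
        ∀ n : ℤ, s ≤ n → n ≤ t → 0 < W a u m n} =
        {x : WithBot ℤ | ∃ m : ℤ, x = (m : WithBot ℤ) ∧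
          ((m + 1 : ℤ) : WithBot ℤ) ≤ tau a u s t} := by
      ext x
      refine exists_congr fun m => and_congr_right fun _ => ⟨fun ⟨_, hpos⟩ => ?_, fun hm => ?_⟩
      · exact (coe_le_tau_iff hmono hst (m + 1)).2 (by simpa using hpos)
      · have hms : m + 1 ≤ s := WithBot.coe_le_coe.1 (hm.trans (tau_le s t))
        exact ⟨by omega, by simpa using (coe_le_tau_iff hmono hst (m + 1)).1 hm⟩
    rw [hset, one_add_sSup_setOf_add_one_le]

/-- pointwise, for `j ≤ s ≤ t`: `τ[s,t] < j` iff some `n ∈ [s,t]` has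
`W^{j-1}_n = 0`; consequently `τ[s,t] = 1 + sup{m < s : W^m_n > 0 ∀ n ∈ [s,t]}`
(in `WithBot ℤ`, where `sup ∅ = ⊥` and `1 + ⊥ = ⊥`). -/
theorem stmt3 (a : ℕ → ℝ) (ha : ∀ k, a k ∈ Set.Icc (0:ℝ) 1) (hmono : Monotone a)
    (u : ℤ → ℝ) (j s t : ℤ) (hjs : j ≤ s) (hst : s ≤ t) :
    (tau a u s t < (j : WithBot ℤ) ↔
        ∃ n : ℤ, s ≤ n ∧ n ≤ t ∧ W a u (j - 1) n = 0) ∧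
      tau a u s t = 1 + sSup {x : WithBot ℤ | ∃ m : ℤ, x = (m : WithBot ℤ) ∧ m < s ∧
        ∀ n : ℤ, s ≤ n → n ≤ t → 0 < W a u m n} :=
  stmt3_general a hmono u j s t hst
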